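/- Let r ≥ 2, let T be an r-uniform supertree with at least two edges, let u and v be two vertices contained in a common edge of T, and let p ≥ q ≥ 1 be integers. Then φ(T^{(1)}(u,v;p,q), x) − φ(T^{(1)}(u,v;p+1,q−1), x) = x^{(r−2)(q−1)} · ( x^{r−2}·φ(T(u;p−q,0), x) − φ((T−v)(u;p−q+1,0), x) ), where T^{(1)}(u,v;p,q) is obtained from T by attaching a pendant path of length p at u and a pendant path of length q at v, and (T−v)(u;p−q+1,0) is obtained from T−v by attaching a pendant path of length p−q+1 at u. -/

import Mathlib

open Classical

noncomputable section

/-- A finite hypergraph: a finite vertex set together with a finite set of edges,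
each edge being a finite set of vertices. -/
structure FinHypergraph (α : Type*) where
  verts : Finset α
  edges : Finset (Finset α)

namespace FinHypergraph

variable {α : Type*}

/-- Every edge of `H` is a subset of the vertex set of `H`. -/
def WellFormed (H : FinHypergraph α) : Prop := ∀ e ∈ H.edges, e ⊆ H.verts

/-- `H` is `r`-uniform: every edge has exactly `r` vertices. -/
def Uniform (H : FinHypergraph α) (r : ℕ) : Prop := ∀ e ∈ H.edges, e.card = r

/-- A set of edges is a matching if its members are pairwise disjoint. -/
def IsMatchingSet (M : Finset (Finset α)) : Prop :=
  ∀ e ∈ M, ∀ f ∈ M, e ≠ f → Disjoint e f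

/-- `m(H,k)`: the number of matchings of `H` consisting of exactly `k` edges. -/
noncomputable def matchCount (H : FinHypergraph α) (k : ℕ) : ℕ :=
  (H.edges.powerset.filter (fun M => M.card = k ∧ IsMatchingSet M)).card

/-- The matching polynomial `φ(H,x) = Σ_k (-1)^k m(H,k) x^(n - r·k)` of an
`r`-uniform hypergraph `H` with `n` vertices, evaluated at a real number `x`. -/
noncomputable def matchPoly (H : FinHypergraph α) (r : ℕ) (x : ℝ) : ℝ :=
  ∑ k ∈ Finset.range (H.verts.card + 1),
    (-1 : ℝ) ^ k * (H.matchCount k : ℝ) * x ^ (H.verts.card - r * k)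

/-- `H − S`: delete the vertices of `S` and all edges meeting `S`. -/
def removeVerts (H : FinHypergraph α) (S : Finset α) : FinHypergraph α :=
  ⟨H.verts \ S, H.edges.filter (fun e => Disjoint e S)⟩

/-- `H` is connected: nonempty vertex set, and any two vertices are linked by a chain of
vertices successively lying in a common edge. -/
def Connected (H : FinHypergraph α) : Prop :=
  H.verts.Nonempty ∧ ∀ u ∈ H.verts, ∀ v ∈ H.verts,
    Relation.ReflTransGen (fun a b => ∃ e ∈ H.edges, a ∈ e ∧ b ∈ e) u v

/-- `H` has a cycle: an alternating sequence `v_0 e_0 v_1 e_1 … v_{ℓ-1} e_{ℓ-1} v_0`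
(with `ℓ ≥ 2`) of distinct vertices and distinct edges such that consecutive vertices lie
in the intermediate edge. -/
def HasCycle (H : FinHypergraph α) : Prop :=
  ∃ (ℓ : ℕ) (v : ℕ → α) (e : ℕ → Finset α), 2 ≤ ℓ ∧
    Set.InjOn v (Set.Iio ℓ) ∧ Set.InjOn e (Set.Iio ℓ) ∧
    ∀ i < ℓ, e i ∈ H.edges ∧ v i ∈ e i ∧ v ((i + 1) % ℓ) ∈ e i

/-- An `r`-uniform supertree: a connected acyclic `r`-uniform hypergraph. -/
def IsSupertree (H : FinHypergraph α) (r : ℕ) : Prop :=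
  H.WellFormed ∧ H.Uniform r ∧ H.Connected ∧ ¬ H.HasCycle

/-- The edges of the `r`-uniform loose path of length `p` along the vertex labelling `w`:
the `i`-th edge consists of the `r` vertices `w (i*(r-1)), …, w ((i+1)*(r-1))`, so that
consecutive edges share exactly one vertex. -/
def loosePathEdges (r p : ℕ) (w : ℕ → α) : Finset (Finset α) :=
  (Finset.range p).image (fun i => (Finset.Icc (i * (r - 1)) ((i + 1) * (r - 1))).image w)

/-- `P` is an `r`-uniform loose path with `m` edges (`P_m^r`); for `m = 0` it is a single
vertex with no edge. -/
def IsLoosePath (r m : ℕ) (P : FinHypergraph α) : Prop :=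
  ∃ w : ℕ → α, Set.InjOn w (Set.Iic (m * (r - 1))) ∧
    P.verts = (Finset.Icc 0 (m * (r - 1))).image w ∧
    P.edges = loosePathEdges r m w

/-- `T'` is obtained from `T` by attaching a pendant path of length `p` at the vertex `v`:
a loose path of length `p`, all of whose vertices other than its first joint vertex are
new, is glued to `T` by identifying its first joint vertex with `v`. -/
def IsPendantPathAttach (r : ℕ) (T : FinHypergraph α) (v : α) (p : ℕ) (T' : FinHypergraph α) : Prop :=
  v ∈ T.verts ∧ ∃ w : ℕ → α, w 0 = v ∧
    Set.InjOn w (Set.Iic (p * (r - 1))) ∧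
    (∀ j, 1 ≤ j → j ≤ p * (r - 1) → w j ∉ T.verts) ∧
    T'.verts = T.verts ∪ (Finset.Icc 1 (p * (r - 1))).image w ∧
    T'.edges = T.edges ∪ loosePathEdges r p w

/-- `T'` is `T(v;p,q)`: obtained from `T` by attaching two pendant paths of lengths `p`
and `q` at the vertex `v`. -/
def IsTwoPathAttach (r : ℕ) (T : FinHypergraph α) (v : α) (p q : ℕ) (T' : FinHypergraph α) : Prop :=
  ∃ T1 : FinHypergraph α, IsPendantPathAttach r T v p T1 ∧ IsPendantPathAttach r T1 v q T'

/-- `T'` is obtained from `T` by attaching a pendant path of length `p` at `u` and a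
pendant path of length `q` at `v`. -/
def IsTwoVertexPathAttach (r : ℕ) (T : FinHypergraph α) (u : α) (p : ℕ) (v : α) (q : ℕ)
    (T' : FinHypergraph α) : Prop :=
  ∃ T1 : FinHypergraph α, IsPendantPathAttach r T u p T1 ∧ IsPendantPathAttach r T1 v q T'

end FinHypergraph

open FinHypergraph

/-! Deleting the last edge of a pendant loose path attached at `z` gives
`φ(G + P_{s+2}) = x^{r-1} φ(G + P_{s+1}) - x^{r-2} φ(G + P_s)` and
`φ(G + P_1) = x^{r-1} φ(G) - φ(G - z)`, so `φ(G + P_s) = U_{s+1} φ(G) - U_s φ(G - z)` with `U` the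
Lucas sequence of `c = x^{r-1}`, `d = x^{r-2}`. Expanding all four polynomials this way in terms of
`φ(T)`, `φ(T - u)`, `φ(T - v)` and `φ(T - v - u)`, the identity becomes, coefficient by
coefficient, d'Ocagne's identity `U_{m+1} U_{m+k} - U_m U_{m+k+1} = d^m U_k`. -/

def lucasU {R : Type*} [CommRing R] (c d : R) : ℕ → R
  | 0 => 0
  | 1 => 1
  | n + 2 => c * lucasU c d (n + 1) - d * lucasU c d n

theorem lucasU_succ_mul_sub_mul_succ {R : Type*} [CommRing R] (c d : R) (m k : ℕ) :
    lucasU c d (m + 1) * lucasU c d (m + k) - lucasU c d m * lucasU c d (m + k + 1)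
      = d ^ m * lucasU c d k := by
  induction m with
  | zero => simp [lucasU]
  | succ m ih =>
    rw [show m + 1 + k = m + k + 1 by omega, show m + 1 + 1 = m + 2 from rfl,
      show m + k + 1 + 1 = m + k + 2 from rfl, lucasU, lucasU, pow_succ]
    linear_combination d * ih

open Finset

namespace FinHypergraph

variable {α : Type*}

@[ext]
theorem ext {H₁ H₂ : FinHypergraph α} (hv : H₁.verts = H₂.verts) (he : H₁.edges = H₂.edges) :
    H₁ = H₂ := by
  cases H₁; cases H₂; congr

def deleteEdge (H : FinHypergraph α) (e : Finset α) : FinHypergraph α :=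
  ⟨H.verts, H.edges.erase e⟩

def addIsolated (H : FinHypergraph α) (S : Finset α) : FinHypergraph α :=
  ⟨H.verts ∪ S, H.edges⟩

def matchings (H : FinHypergraph α) : Finset (Finset (Finset α)) :=
  H.edges.powerset.filter IsMatchingSet

theorem isMatchingSet_iff {M : Finset (Finset α)} :
    IsMatchingSet M ↔ (M : Set (Finset α)).PairwiseDisjoint id :=
  Iff.rfl

section MatchingPolynomial

variable {H : FinHypergraph α} {r : ℕ}

theorem mem_matchings {M : Finset (Finset α)} :
    M ∈ H.matchings ↔ M ⊆ H.edges ∧ IsMatchingSet M := by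
  rw [matchings, mem_filter, mem_powerset]

theorem WellFormed.removeVerts (hH : H.WellFormed) (S : Finset α) :
    (H.removeVerts S).WellFormed := by
  intro e he
  obtain ⟨he, hdisj⟩ := mem_filter.1 he
  exact subset_sdiff.2 ⟨hH e he, hdisj⟩

theorem Uniform.removeVerts (hH : H.Uniform r) (S : Finset α) : (H.removeVerts S).Uniform r :=
  fun e he => hH e (mem_filter.1 he).1

theorem WellFormed.deleteEdge (hH : H.WellFormed) (e : Finset α) : (H.deleteEdge e).WellFormed :=
  fun f hf => hH f (mem_of_mem_erase hf)

theorem Uniform.deleteEdge (hH : H.Uniform r) (e : Finset α) : (H.deleteEdge e).Uniform r :=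
  fun f hf => hH f (mem_of_mem_erase hf)

theorem WellFormed.addIsolated (hH : H.WellFormed) (S : Finset α) : (H.addIsolated S).WellFormed :=
  fun e he => (hH e he).trans subset_union_left

theorem mul_card_le_of_mem_matchings (hWF : H.WellFormed) (hU : H.Uniform r)
    {M : Finset (Finset α)} (hM : M ∈ H.matchings) : r * M.card ≤ H.verts.card := by
  obtain ⟨hsub, hdisj⟩ := mem_matchings.1 hM
  calc r * M.card = ∑ e ∈ M, e.card := by
        rw [sum_congr rfl fun e he => hU e (hsub he), sum_const, smul_eq_mul, mul_comm]
    _ = (M.biUnion id).card := (card_biUnion (isMatchingSet_iff.1 hdisj)).symm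
    _ ≤ H.verts.card := card_le_card (biUnion_subset.2 fun e he => hWF e (hsub he))

theorem matchPoly_eq_sum_matchings (hWF : H.WellFormed) (hU : H.Uniform r) (hr : 0 < r)
    (x : ℝ) :
    H.matchPoly r x = ∑ M ∈ H.matchings, (-1 : ℝ) ^ M.card * x ^ (H.verts.card - r * M.card) := by
  have hmaps : ∀ M ∈ H.matchings, M.card ∈ range (H.verts.card + 1) := fun M hM =>
    mem_range.2 (Nat.lt_succ_of_le
      ((Nat.le_mul_of_pos_left _ hr).trans (mul_card_le_of_mem_matchings hWF hU hM)))
  rw [← sum_fiberwise_of_maps_to hmaps, matchPoly]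
  refine sum_congr rfl fun k _ => ?_
  rw [sum_congr rfl fun M hM => by rw [(mem_filter.1 hM).2], sum_const, nsmul_eq_mul, mul_assoc,
    mul_left_comm, matchCount, matchings, filter_filter]
  simp only [and_comm]

theorem matchPoly_addIsolated (hWF : H.WellFormed) (hU : H.Uniform r) (hr : 0 < r)
    {S : Finset α} (hS : Disjoint H.verts S) (x : ℝ) :
    (H.addIsolated S).matchPoly r x = x ^ S.card * H.matchPoly r x := by
  rw [matchPoly_eq_sum_matchings (hWF.addIsolated S) hU hr, matchPoly_eq_sum_matchings hWF hU hr,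
    mul_sum]
  refine sum_congr rfl fun M hM => ?_
  have hle := mul_card_le_of_mem_matchings hWF hU hM
  rw [addIsolated, card_union_of_disjoint hS, Nat.sub_add_comm hle, pow_add]
  ring

theorem filter_notMem_matchings (e : Finset α) :
    H.matchings.filter (e ∉ ·) = (H.deleteEdge e).matchings := by
  ext M
  simp only [mem_filter, mem_matchings, deleteEdge, subset_erase]
  tauto

theorem erase_mem_matchings_removeVerts {M : Finset (Finset α)} (hM : M ∈ H.matchings)
    {e : Finset α} (heM : e ∈ M) : M.erase e ∈ (H.removeVerts e).matchings := by
  obtain ⟨hsub, hdisj⟩ := mem_matchings.1 hM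
  refine mem_matchings.2 ⟨fun f hf => mem_filter.2 ⟨hsub (mem_of_mem_erase hf), ?_⟩,
    (isMatchingSet_iff.1 hdisj).subset (coe_subset.2 (erase_subset e M))⟩
  exact hdisj _ (mem_of_mem_erase hf) _ heM (ne_of_mem_erase hf)

theorem insert_mem_matchings {e : Finset α} (he : e ∈ H.edges) {M : Finset (Finset α)}
    (hM : M ∈ (H.removeVerts e).matchings) : insert e M ∈ H.matchings := by
  obtain ⟨hsub, hdisj⟩ := mem_matchings.1 hM
  refine mem_matchings.2 ⟨insert_subset he fun f hf => (mem_filter.1 (hsub hf)).1, ?_⟩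
  rw [isMatchingSet_iff, coe_insert]
  exact (isMatchingSet_iff.1 hdisj).insert fun f hf _ => (mem_filter.1 (hsub hf)).2.symm

theorem matchPoly_eq_deleteEdge_sub_removeVerts (hWF : H.WellFormed) (hU : H.Uniform r)
    (hr : 0 < r) {e : Finset α} (he : e ∈ H.edges) (x : ℝ) :
    H.matchPoly r x = (H.deleteEdge e).matchPoly r x - (H.removeVerts e).matchPoly r x := by
  have hne : e.Nonempty := card_pos.1 (hU e he ▸ hr)
  have hcard : (H.removeVerts e).verts.card = H.verts.card - r := by
    rw [removeVerts, card_sdiff_of_subset (hWF e he), hU e he]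
  rw [matchPoly_eq_sum_matchings hWF hU hr,
    matchPoly_eq_sum_matchings (hWF.deleteEdge e) (hU.deleteEdge e) hr,
    matchPoly_eq_sum_matchings (hWF.removeVerts e) (hU.removeVerts e) hr, sub_eq_add_neg,
    ← sum_neg_distrib, ← sum_filter_add_sum_filter_not H.matchings (e ∈ ·), add_comm,
    filter_notMem_matchings]
  congr 1
  refine sum_nbij' (·.erase e) (insert e) (fun M hM => ?_) (fun M hM => ?_)
    (fun M hM => insert_erase (mem_filter.1 hM).2) (fun M hM => ?_) (fun M hM => ?_)
  · exact erase_mem_matchings_removeVerts (mem_filter.1 hM).1 (mem_filter.1 hM).2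
  · exact mem_filter.2 ⟨insert_mem_matchings he hM, mem_insert_self e M⟩
  · refine erase_insert fun heM => hne.ne_empty (disjoint_self.1 ?_)
    exact (mem_filter.1 ((mem_matchings.1 hM).1 heM)).2
  · rw [← card_erase_add_one (mem_filter.1 hM).2, hcard, pow_succ, Nat.mul_succ, Nat.sub_add_eq,
      Nat.sub_right_comm]
    ring

end MatchingPolynomial

def addPendantEdge (G : FinHypergraph α) (z : α) (S : Finset α) : FinHypergraph α :=
  ⟨G.verts ∪ S, insert (insert z S) G.edges⟩

section PendantEdge

variable {G : FinHypergraph α} {r : ℕ} {z : α} {S : Finset α}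

theorem WellFormed.addPendantEdge (hWF : G.WellFormed) (hz : z ∈ G.verts) :
    (G.addPendantEdge z S).WellFormed := by
  intro e he
  rcases mem_insert.1 he with rfl | he
  · exact insert_subset (mem_union_left S hz) subset_union_right
  · exact (hWF e he).trans subset_union_left

theorem Uniform.addPendantEdge (hU : G.Uniform r) (hz : z ∈ G.verts) (hS : Disjoint G.verts S)
    (hcard : S.card + 1 = r) : (G.addPendantEdge z S).Uniform r := by
  intro e he
  rcases mem_insert.1 he with rfl | he
  · rw [card_insert_of_notMem (disjoint_left.1 hS hz), hcard]
  · exact hU e he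

theorem deleteEdge_addPendantEdge (hWF : G.WellFormed) (hS : Disjoint G.verts S)
    (hSne : S.Nonempty) : (G.addPendantEdge z S).deleteEdge (insert z S) = G.addIsolated S := by
  obtain ⟨y, hy⟩ := hSne
  refine ext rfl (erase_insert fun he => ?_)
  exact disjoint_right.1 hS hy (hWF _ he (mem_insert_of_mem hy))

theorem removeVerts_addPendantEdge (hWF : G.WellFormed) (hS : Disjoint G.verts S) :
    (G.addPendantEdge z S).removeVerts (insert z S) = G.removeVerts {z} := by
  ext1
  · ext a
    simp only [addPendantEdge, removeVerts, mem_sdiff, mem_union, mem_insert, mem_singleton]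
    have := fun ha : a ∈ G.verts => disjoint_left.1 hS ha
    tauto
  · rw [addPendantEdge, removeVerts, removeVerts, filter_insert,
      if_neg (not_disjoint_iff.2 ⟨z, mem_insert_self z S, mem_insert_self z S⟩)]
    refine filter_congr fun f hf => ?_
    rw [disjoint_insert_right, disjoint_singleton_right, and_iff_left_iff_imp]
    exact fun _ => disjoint_of_subset_left (hWF f hf) hS

theorem removeVerts_singleton_addPendantEdge (hWF : G.WellFormed) (hS : Disjoint G.verts S)
    {y : α} (hy : y ∈ S) : (G.addPendantEdge z S).removeVerts {y} = G.addIsolated (S.erase y) := by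
  have hyG : y ∉ G.verts := disjoint_right.1 hS hy
  ext1
  · ext a
    simp only [addPendantEdge, addIsolated, removeVerts, mem_sdiff, mem_union, mem_erase,
      mem_singleton]
    constructor
    · rintro ⟨ha | ha, hay⟩
      exacts [Or.inl ha, Or.inr ⟨hay, ha⟩]
    · rintro (ha | ⟨hay, ha⟩)
      exacts [⟨Or.inl ha, fun h => hyG (h ▸ ha)⟩, ⟨Or.inr ha, hay⟩]
  · rw [addPendantEdge, addIsolated, removeVerts, filter_insert,
      if_neg (not_disjoint_iff.2 ⟨y, mem_insert_of_mem hy, mem_singleton_self y⟩)]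
    exact filter_true_of_mem fun f hf => disjoint_singleton_right.2 fun h => hyG (hWF f hf h)

theorem matchPoly_addPendantEdge (hWF : G.WellFormed) (hU : G.Uniform r) (hr : 2 ≤ r)
    (hz : z ∈ G.verts) (hS : Disjoint G.verts S) (hcard : S.card + 1 = r) (x : ℝ) :
    (G.addPendantEdge z S).matchPoly r x
      = x ^ (r - 1) * G.matchPoly r x - (G.removeVerts {z}).matchPoly r x := by
  have hSne : S.Nonempty := card_pos.1 (by omega)
  rw [matchPoly_eq_deleteEdge_sub_removeVerts (hWF.addPendantEdge hz)
      (hU.addPendantEdge hz hS hcard) (by omega) (mem_insert_self _ _),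
    deleteEdge_addPendantEdge hWF hS hSne, removeVerts_addPendantEdge hWF hS,
    matchPoly_addIsolated hWF hU (by omega) hS, show S.card = r - 1 by omega]

theorem matchPoly_removeVerts_addPendantEdge (hWF : G.WellFormed) (hU : G.Uniform r)
    (hr : 0 < r) (hS : Disjoint G.verts S) (hcard : S.card + 1 = r) {y : α} (hy : y ∈ S)
    (x : ℝ) :
    ((G.addPendantEdge z S).removeVerts {y}).matchPoly r x = x ^ (r - 2) * G.matchPoly r x := by
  rw [removeVerts_singleton_addPendantEdge hWF hS hy,
    matchPoly_addIsolated hWF hU hr (disjoint_of_subset_right (erase_subset y S) hS),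
    card_erase_of_mem hy, show S.card - 1 = r - 2 by omega]

end PendantEdge

def attachPath (H : FinHypergraph α) (r : ℕ) (w : ℕ → α) (s : ℕ) : FinHypergraph α :=
  ⟨H.verts ∪ (Icc 1 (s * (r - 1))).image w, H.edges ∪ loosePathEdges r s w⟩

structure IsPendantPathLabelling (r : ℕ) (H : FinHypergraph α) (z : α) (s : ℕ) (w : ℕ → α) :
    Prop where
  mem : z ∈ H.verts
  map_zero : w 0 = z
  injOn : Set.InjOn w (Set.Iic (s * (r - 1)))
  notMem : ∀ j, 1 ≤ j → j ≤ s * (r - 1) → w j ∉ H.verts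

theorem isPendantPathAttach_iff {r s : ℕ} {H H' : FinHypergraph α} {z : α} :
    IsPendantPathAttach r H z s H' ↔
      ∃ w, IsPendantPathLabelling r H z s w ∧ H' = H.attachPath r w s := by
  constructor
  · rintro ⟨hz, w, h0, hinj, hnew, hv, he⟩
    exact ⟨w, ⟨hz, h0, hinj, hnew⟩, ext hv he⟩
  · rintro ⟨w, ⟨hz, h0, hinj, hnew⟩, rfl⟩
    exact ⟨hz, w, h0, hinj, hnew, rfl, rfl⟩

section PendantPath

variable {H : FinHypergraph α} {r : ℕ} {z : α} {w : ℕ → α} {s : ℕ}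

theorem attachPath_zero : H.attachPath r w 0 = H := by
  ext1 <;> simp [attachPath, loosePathEdges]

theorem attachPath_succ : H.attachPath r w (s + 1) = (H.attachPath r w s).addPendantEdge
    (w (s * (r - 1))) ((Icc (s * (r - 1) + 1) ((s + 1) * (r - 1))).image w) := by
  have hK : (s + 1) * (r - 1) = s * (r - 1) + (r - 1) := Nat.succ_mul s (r - 1)
  ext1
  · show H.verts ∪ (Icc 1 ((s + 1) * (r - 1))).image w = (H.verts ∪ (Icc 1 (s * (r - 1))).image w)
      ∪ (Icc (s * (r - 1) + 1) ((s + 1) * (r - 1))).image w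
    rw [union_assoc, ← image_union]
    congr 2
    ext j
    simp only [mem_Icc, mem_union]
    omega
  · show H.edges ∪ loosePathEdges r (s + 1) w = insert (insert (w (s * (r - 1)))
      ((Icc (s * (r - 1) + 1) ((s + 1) * (r - 1))).image w)) (H.edges ∪ loosePathEdges r s w)
    rw [loosePathEdges, loosePathEdges, range_add_one, image_insert, union_insert, ← image_insert,
      insert_Icc_add_one_left_eq_Icc (by omega)]

namespace IsPendantPathLabelling

theorem mono (h : IsPendantPathLabelling r H z s w) {t : ℕ} (hts : t ≤ s) :
    IsPendantPathLabelling r H z t w :=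
  have hle : t * (r - 1) ≤ s * (r - 1) := Nat.mul_le_mul_right _ hts
  ⟨h.mem, h.map_zero, h.injOn.mono (Set.Iic_subset_Iic.2 hle),
    fun j hj₁ hj₂ => h.notMem j hj₁ (hj₂.trans hle)⟩

theorem mem_attachPath (h : IsPendantPathLabelling r H z s w) {j : ℕ} (hj : j ≤ s * (r - 1)) :
    w j ∈ (H.attachPath r w s).verts := by
  rcases Nat.eq_zero_or_pos j with rfl | hj₀
  · exact mem_union_left _ (h.map_zero ▸ h.mem)
  · exact mem_union_right _ (mem_image_of_mem w (mem_Icc.2 ⟨hj₀, hj⟩))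

theorem disjoint_attachPath (h : IsPendantPathLabelling r H z (s + 1) w) :
    Disjoint (H.attachPath r w s).verts ((Icc (s * (r - 1) + 1) ((s + 1) * (r - 1))).image w) := by
  have hK : s * (r - 1) ≤ (s + 1) * (r - 1) := Nat.mul_le_mul_right _ s.le_succ
  rw [disjoint_right]
  rintro _ ha hmem
  obtain ⟨j, hj, rfl⟩ := mem_image.1 ha
  rw [mem_Icc] at hj
  rcases mem_union.1 hmem with hH | hP
  · exact h.notMem j (by omega) hj.2 hH
  · obtain ⟨i, hi, hij⟩ := mem_image.1 hP
    rw [mem_Icc] at hi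
    have := h.injOn (Set.mem_Iic.2 (hi.2.trans hK)) (Set.mem_Iic.2 hj.2) hij
    omega

theorem card_image_Icc_add_one (h : IsPendantPathLabelling r H z (s + 1) w) (hr : 0 < r) :
    ((Icc (s * (r - 1) + 1) ((s + 1) * (r - 1))).image w).card + 1 = r := by
  have hK : (s + 1) * (r - 1) = s * (r - 1) + (r - 1) := Nat.succ_mul s (r - 1)
  rw [card_image_of_injOn (h.injOn.mono fun j hj => Set.mem_Iic.2 (mem_Icc.1 hj).2),
    Nat.card_Icc]
  omega

theorem wellFormed_attachPath (h : IsPendantPathLabelling r H z s w) (hWF : H.WellFormed) :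
    (H.attachPath r w s).WellFormed := by
  induction s with
  | zero => rwa [attachPath_zero]
  | succ s ih =>
    have h' := h.mono s.le_succ
    rw [attachPath_succ]
    exact (ih h').addPendantEdge (h'.mem_attachPath le_rfl)

theorem uniform_attachPath (h : IsPendantPathLabelling r H z s w) (hU : H.Uniform r)
    (hr : 0 < r) : (H.attachPath r w s).Uniform r := by
  induction s with
  | zero => rwa [attachPath_zero]
  | succ s ih =>
    have h' := h.mono s.le_succ
    rw [attachPath_succ]
    exact (ih h').addPendantEdge (h'.mem_attachPath le_rfl) h.disjoint_attachPath
      (h.card_image_Icc_add_one hr)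

theorem matchPoly_attachPath_succ (h : IsPendantPathLabelling r H z (s + 1) w)
    (hWF : H.WellFormed) (hU : H.Uniform r) (hr : 2 ≤ r) (x : ℝ) :
    (H.attachPath r w (s + 1)).matchPoly r x = x ^ (r - 1) * (H.attachPath r w s).matchPoly r x
      - ((H.attachPath r w s).removeVerts {w (s * (r - 1))}).matchPoly r x := by
  have h' := h.mono s.le_succ
  rw [attachPath_succ]
  exact matchPoly_addPendantEdge (h'.wellFormed_attachPath hWF) (h'.uniform_attachPath hU
    (by omega)) hr (h'.mem_attachPath le_rfl) h.disjoint_attachPath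
    (h.card_image_Icc_add_one (by omega)) x

theorem matchPoly_removeVerts_attachPath_succ (h : IsPendantPathLabelling r H z (s + 1) w)
    (hWF : H.WellFormed) (hU : H.Uniform r) (hr : 2 ≤ r) (x : ℝ) :
    ((H.attachPath r w (s + 1)).removeVerts {w ((s + 1) * (r - 1))}).matchPoly r x
      = x ^ (r - 2) * (H.attachPath r w s).matchPoly r x := by
  have h' := h.mono s.le_succ
  have hK : (s + 1) * (r - 1) = s * (r - 1) + (r - 1) := Nat.succ_mul s (r - 1)
  rw [attachPath_succ]
  exact matchPoly_removeVerts_addPendantEdge (h'.wellFormed_attachPath hWF)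
    (h'.uniform_attachPath hU (by omega)) (by omega) h.disjoint_attachPath
    (h.card_image_Icc_add_one (by omega)) (mem_image_of_mem w (mem_Icc.2 ⟨by omega, le_rfl⟩)) x

theorem matchPoly_attachPath (h : IsPendantPathLabelling r H z s w) (hWF : H.WellFormed)
    (hU : H.Uniform r) (hr : 2 ≤ r) (x : ℝ) :
    (H.attachPath r w s).matchPoly r x
      = lucasU (x ^ (r - 1)) (x ^ (r - 2)) (s + 1) * H.matchPoly r x
        - lucasU (x ^ (r - 1)) (x ^ (r - 2)) s * (H.removeVerts {z}).matchPoly r x := by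
  induction s using Nat.twoStepInduction with
  | zero => simp [attachPath_zero, lucasU]
  | one =>
    rw [h.matchPoly_attachPath_succ hWF hU hr, attachPath_zero, zero_mul, h.map_zero]
    simp [lucasU]
  | more s ih₀ ih₁ =>
    rw [h.matchPoly_attachPath_succ hWF hU hr,
      (h.mono (s + 1).le_succ).matchPoly_removeVerts_attachPath_succ hWF hU hr,
      ih₁ (h.mono (s + 1).le_succ), ih₀ (h.mono (by omega))]
    simp only [lucasU]
    ring

theorem removeVerts_attachPath (h : IsPendantPathLabelling r H z s w) {v : α}
    (hv : v ∈ H.verts) (hvz : v ≠ z) :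
    (H.attachPath r w s).removeVerts {v} = (H.removeVerts {v}).attachPath r w s := by
  have hvw : ∀ j ≤ s * (r - 1), w j ≠ v := by
    rintro j hj rfl
    rcases Nat.eq_zero_or_pos j with rfl | hj₀
    · exact hvz h.map_zero
    · exact h.notMem j hj₀ hj hv
  ext1
  · show (H.verts ∪ (Icc 1 (s * (r - 1))).image w) \ {v}
      = H.verts \ {v} ∪ (Icc 1 (s * (r - 1))).image w
    have hI : Disjoint ((Icc 1 (s * (r - 1))).image w) {v} :=
      disjoint_singleton_right.2 fun hmem => by
        obtain ⟨j, hj, hjv⟩ := mem_image.1 hmem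
        exact hvw j (mem_Icc.1 hj).2 hjv
    rw [union_sdiff_distrib, sdiff_eq_self_of_disjoint hI]
  · show (H.edges ∪ loosePathEdges r s w).filter (Disjoint · {v})
      = H.edges.filter (Disjoint · {v}) ∪ loosePathEdges r s w
    rw [filter_union]
    congr 1
    refine filter_true_of_mem fun f hf => disjoint_singleton_right.2 fun hvf => ?_
    obtain ⟨i, hi, rfl⟩ := mem_image.1 hf
    obtain ⟨j, hj, hjv⟩ := mem_image.1 hvf
    refine hvw j ((mem_Icc.1 hj).2.trans (Nat.mul_le_mul_right _ ?_)) hjv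
    exact mem_range.1 hi

theorem removeVerts (h : IsPendantPathLabelling r H z s w) {v : α} (hvz : v ≠ z) :
    IsPendantPathLabelling r (H.removeVerts {v}) z s w :=
  ⟨mem_sdiff.2 ⟨h.mem, fun hz => hvz (mem_singleton.1 hz).symm⟩, h.map_zero, h.injOn,
    fun j hj₁ hj₂ hj => h.notMem j hj₁ hj₂ (mem_sdiff.1 hj).1⟩

end IsPendantPathLabelling

end PendantPath

namespace IsPendantPathAttach

variable {H H' : FinHypergraph α} {r s : ℕ} {z : α}

theorem eq_of_length_zero (h : IsPendantPathAttach r H z 0 H') : H' = H := by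
  obtain ⟨w, -, rfl⟩ := isPendantPathAttach_iff.1 h
  exact attachPath_zero

theorem wellFormed (h : IsPendantPathAttach r H z s H') (hWF : H.WellFormed) : H'.WellFormed := by
  obtain ⟨w, hw, rfl⟩ := isPendantPathAttach_iff.1 h
  exact hw.wellFormed_attachPath hWF

theorem uniform (h : IsPendantPathAttach r H z s H') (hU : H.Uniform r) (hr : 0 < r) :
    H'.Uniform r := by
  obtain ⟨w, hw, rfl⟩ := isPendantPathAttach_iff.1 h
  exact hw.uniform_attachPath hU hr

theorem removeVerts (h : IsPendantPathAttach r H z s H') {v : α} (hv : v ∈ H.verts)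
    (hvz : v ≠ z) : IsPendantPathAttach r (H.removeVerts {v}) z s (H'.removeVerts {v}) := by
  obtain ⟨w, hw, rfl⟩ := isPendantPathAttach_iff.1 h
  exact isPendantPathAttach_iff.2 ⟨w, hw.removeVerts hvz, hw.removeVerts_attachPath hv hvz⟩

theorem matchPoly_eq (h : IsPendantPathAttach r H z s H') (hWF : H.WellFormed)
    (hU : H.Uniform r) (hr : 2 ≤ r) (x : ℝ) :
    H'.matchPoly r x
      = lucasU (x ^ (r - 1)) (x ^ (r - 2)) (s + 1) * H.matchPoly r x
        - lucasU (x ^ (r - 1)) (x ^ (r - 2)) s * (H.removeVerts {z}).matchPoly r x := by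
  obtain ⟨w, hw, rfl⟩ := isPendantPathAttach_iff.1 h
  exact hw.matchPoly_attachPath hWF hU hr x

end IsPendantPathAttach

theorem IsTwoVertexPathAttach.matchPoly_eq {T A : FinHypergraph α} {r : ℕ} {u v : α} {p q : ℕ}
    (h : IsTwoVertexPathAttach r T u p v q A) (hWF : T.WellFormed) (hU : T.Uniform r)
    (hr : 2 ≤ r) (hv : v ∈ T.verts) (huv : u ≠ v) (x : ℝ) :
    A.matchPoly r x
      = lucasU (x ^ (r - 1)) (x ^ (r - 2)) (q + 1) *
          (lucasU (x ^ (r - 1)) (x ^ (r - 2)) (p + 1) * T.matchPoly r x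
            - lucasU (x ^ (r - 1)) (x ^ (r - 2)) p * (T.removeVerts {u}).matchPoly r x)
        - lucasU (x ^ (r - 1)) (x ^ (r - 2)) q *
          (lucasU (x ^ (r - 1)) (x ^ (r - 2)) (p + 1) * (T.removeVerts {v}).matchPoly r x
            - lucasU (x ^ (r - 1)) (x ^ (r - 2)) p *
              ((T.removeVerts {v}).removeVerts {u}).matchPoly r x) := by
  obtain ⟨T₁, hT₁, hA⟩ := h
  rw [hA.matchPoly_eq (hT₁.wellFormed hWF) (hT₁.uniform hU (by omega)) hr,
    hT₁.matchPoly_eq hWF hU hr,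
    (hT₁.removeVerts hv huv.symm).matchPoly_eq (hWF.removeVerts _) (hU.removeVerts _) hr]

end FinHypergraph

theorem matchPoly_graft_two_adjacent_vertices_general {α : Type*} (r : ℕ) (hr : 2 ≤ r)
    (T : FinHypergraph α) (hT : T.IsSupertree r)
    (u v : α) (huv : u ≠ v) (e : Finset α) (he : e ∈ T.edges)
    (hve : v ∈ e)
    (p q : ℕ) (hq1 : 1 ≤ q) (hqp : q ≤ p)
    (A B C D : FinHypergraph α)
    (hA : IsTwoVertexPathAttach r T u p v q A)
    (hB : IsTwoVertexPathAttach r T u (p + 1) v (q - 1) B)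
    (hC : IsTwoPathAttach r T u (p - q) 0 C)
    (hD : IsTwoPathAttach r (T.removeVerts {v}) u (p - q + 1) 0 D) :
    ∀ x : ℝ, A.matchPoly r x - B.matchPoly r x
      = x ^ ((r - 2) * (q - 1)) *
          (x ^ (r - 2) * C.matchPoly r x - D.matchPoly r x) := by
  intro x
  obtain ⟨hWF, hU, -⟩ := hT
  have hv : v ∈ T.verts := hWF e he hve
  obtain ⟨C₁, hC₁, hC⟩ := hC
  obtain ⟨D₁, hD₁, hD⟩ := hD
  rw [hA.matchPoly_eq hWF hU hr hv huv, hB.matchPoly_eq hWF hU hr hv huv, hC.eq_of_length_zero,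
    hD.eq_of_length_zero, hC₁.matchPoly_eq hWF hU hr,
    hD₁.matchPoly_eq (hWF.removeVerts _) (hU.removeVerts _) hr, pow_mul]
  obtain ⟨m, rfl⟩ : ∃ m, q = m + 1 := ⟨q - 1, by omega⟩
  obtain ⟨k, rfl⟩ : ∃ k, p = m + 1 + k := ⟨p - (m + 1), by omega⟩
  simp only [Nat.add_sub_cancel, Nat.add_sub_cancel_left]
  linear_combination (norm := ring_nf)
    T.matchPoly r x * lucasU_succ_mul_sub_mul_succ (x ^ (r - 1)) (x ^ (r - 2)) (m + 1) (k + 1)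
    - (T.removeVerts {u}).matchPoly r x *
      lucasU_succ_mul_sub_mul_succ (x ^ (r - 1)) (x ^ (r - 2)) (m + 1) k
    - (T.removeVerts {v}).matchPoly r x *
      lucasU_succ_mul_sub_mul_succ (x ^ (r - 1)) (x ^ (r - 2)) m (k + 2)
    + ((T.removeVerts {v}).removeVerts {u}).matchPoly r x *
      lucasU_succ_mul_sub_mul_succ (x ^ (r - 1)) (x ^ (r - 2)) m (k + 1)

/-- For an `r`-uniform supertree `T` (`r ≥ 2`) with at least two edges,
two vertices `u ≠ v` lying in a common edge of `T`, and integers `p ≥ q ≥ 1`,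
`φ(T⁽¹⁾(u,v;p,q), x) − φ(T⁽¹⁾(u,v;p+1,q−1), x)
  = x^((r−2)(q−1)) · ( x^(r−2)·φ(T(u;p−q,0), x) − φ((T−v)(u;p−q+1,0), x) )`. -/
theorem matchPoly_graft_two_adjacent_vertices {α : Type*} (r : ℕ) (hr : 2 ≤ r)
    (T : FinHypergraph α) (hT : T.IsSupertree r) (hTedges : 2 ≤ T.edges.card)
    (u v : α) (huv : u ≠ v) (e : Finset α) (he : e ∈ T.edges)
    (hue : u ∈ e) (hve : v ∈ e)
    (p q : ℕ) (hq1 : 1 ≤ q) (hqp : q ≤ p)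
    (A B C D : FinHypergraph α)
    (hA : IsTwoVertexPathAttach r T u p v q A)
    (hB : IsTwoVertexPathAttach r T u (p + 1) v (q - 1) B)
    (hC : IsTwoPathAttach r T u (p - q) 0 C)
    (hD : IsTwoPathAttach r (T.removeVerts {v}) u (p - q + 1) 0 D) :
    ∀ x : ℝ, A.matchPoly r x - B.matchPoly r x
      = x ^ ((r - 2) * (q - 1)) *
          (x ^ (r - 2) * C.matchPoly r x - D.matchPoly r x) :=
  matchPoly_graft_two_adjacent_vertices_general r hr T hT u v huv e he hve p q hq1 hqp A B C D hA hB
    hC hD
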